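/- Let d ≥ 1, let K ⊆ ℝ^d be a convex, compact set contained in the nonnegative orthant that is down-closed with lower bound 0, and suppose there exists r > 0 with r·B^d_{≥0} ⊆ K. Let R := sup_{x∈K} ‖x‖ (Euclidean norm). Let δ > 0 be small enough that α := (√d+1)δ/r < 1, and define K' := (1−α)·K + δ·𝟙. Then the discrepancy d(K,K') := sup_{x∈K} inf_{y∈K'} ‖x−y‖ satisfies d(K,K') ≤ [√d·(R/r + 1) + R/r]·δ. -/

import Mathlib

open Metric Set

/-- The all-ones vector in `ℝ^d`. -/
def allOnes (d : ℕ) : EuclideanSpace ℝ (Fin d) := WithLp.toLp 2 (fun _ => 1)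

/-- A set `P ⊆ ℝ^d` is down-closed with lower bound `u`: `u ∈ P`, every `y ∈ P`
satisfies `u ≤ y` coordinatewise, and whenever `u ≤ x ≤ y` with `y ∈ P`, also `x ∈ P`. -/
def DownClosedWithLB {d : ℕ} (u : EuclideanSpace ℝ (Fin d)) (P : Set (EuclideanSpace ℝ (Fin d))) :
    Prop :=
  u ∈ P ∧ (∀ y ∈ P, ∀ i, u i ≤ y i) ∧
    ∀ x y : EuclideanSpace ℝ (Fin d), y ∈ P → (∀ i, u i ≤ x i) → (∀ i, x i ≤ y i) → x ∈ P

theorem norm_allOnes (d : ℕ) : ‖allOnes d‖ = Real.sqrt d := by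
  simp [allOnes, EuclideanSpace.norm_eq]

theorem dist_one_sub_smul_add_smul_le {E : Type*} [SeminormedAddCommGroup E] [NormedSpace ℝ E]
    (a b : ℝ) (x v : E) : dist x ((1 - a) • x + b • v) ≤ |a| * ‖x‖ + |b| * ‖v‖ := by
  calc dist x ((1 - a) • x + b • v) = ‖a • x - b • v‖ := by
        rw [dist_eq_norm]; congr 1; module
    _ ≤ ‖a • x‖ + ‖b • v‖ := norm_sub_le _ _
    _ = |a| * ‖x‖ + |b| * ‖v‖ := by rw [norm_smul, norm_smul, Real.norm_eq_abs, Real.norm_eq_abs]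

theorem discrepancy_of_shrunk_translated_set_general
    (d : ℕ) (K : Set (EuclideanSpace ℝ (Fin d)))
    (hcomp : IsCompact K)
    (r : ℝ) (hr : 0 < r)
    (R : ℝ) (hR : R = sSup ((fun x : EuclideanSpace ℝ (Fin d) => ‖x‖) '' K))
    (δ : ℝ) (hδ : 0 < δ)
    (α : ℝ) (hα : α = (Real.sqrt d + 1) * δ / r)
    (K' : Set (EuclideanSpace ℝ (Fin d)))
    (hK' : K' = (fun x : EuclideanSpace ℝ (Fin d) => (1 - α) • x + δ • allOnes d) '' K) :
    ∀ x ∈ K, Metric.infDist x K' ≤ (Real.sqrt d * (R / r + 1) + R / r) * δ := by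
  intro x hx
  have hα0 : 0 ≤ α := hα ▸ by positivity
  have hxR : ‖x‖ ≤ R := hR ▸ le_csSup (hcomp.image continuous_norm).bddAbove ⟨x, hx, rfl⟩
  calc infDist x K' ≤ dist x ((1 - α) • x + δ • allOnes d) :=
        infDist_le_dist_of_mem (hK' ▸ mem_image_of_mem _ hx)
    _ ≤ |α| * ‖x‖ + |δ| * ‖allOnes d‖ := dist_one_sub_smul_add_smul_le _ _ _ _
    _ ≤ α * R + δ * Real.sqrt d := by
        rw [abs_of_nonneg hα0, abs_of_pos hδ, norm_allOnes]; gcongr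
    _ = (Real.sqrt d * (R / r + 1) + R / r) * δ := by
        rw [hα]; field_simp; ring

theorem discrepancy_of_shrunk_translated_set
    (d : ℕ) (hd : 1 ≤ d) (K : Set (EuclideanSpace ℝ (Fin d)))
    (hconv : Convex ℝ K) (hcomp : IsCompact K)
    (hpos : K ⊆ {x | ∀ i, 0 ≤ x i})
    (hdown : DownClosedWithLB (0 : EuclideanSpace ℝ (Fin d)) K)
    (r : ℝ) (hr : 0 < r)
    (hrK : (fun x : EuclideanSpace ℝ (Fin d) => r • x) ''
        (closedBall (0 : EuclideanSpace ℝ (Fin d)) 1 ∩ {x | ∀ i, 0 ≤ x i}) ⊆ K)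
    (R : ℝ) (hR : R = sSup ((fun x : EuclideanSpace ℝ (Fin d) => ‖x‖) '' K))
    (δ : ℝ) (hδ : 0 < δ)
    (α : ℝ) (hα : α = (Real.sqrt d + 1) * δ / r) (hα1 : α < 1)
    (K' : Set (EuclideanSpace ℝ (Fin d)))
    (hK' : K' = (fun x : EuclideanSpace ℝ (Fin d) => (1 - α) • x + δ • allOnes d) '' K) :
    ∀ x ∈ K, Metric.infDist x K' ≤ (Real.sqrt d * (R / r + 1) + R / r) * δ :=
  discrepancy_of_shrunk_translated_set_general d K hcomp r hr R hR δ hδ α hα K' hK'
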